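/- arXiv:2201.11282 — 4 statements merged into one kernel-verified Lean document; each statement's English description precedes it below -/
import Mathlib

section
/- Every eigenvalue λ ∈ ℂ of the matrix 𝓑 satisfies Re(λ) ≥ 0 (𝓑 is positive semistable). -/
open Matrix

/-- The double saddle point matrix 𝓑 = [[A, Bᵀ, 0], [−B, 0, −Cᵀ], [0, C, 0]]. -/
def calB {n m l : ℕ} (A : Matrix (Fin n) (Fin n) ℝ) (B : Matrix (Fin m) (Fin n) ℝ)
    (C : Matrix (Fin l) (Fin m) ℝ) :
    Matrix ((Fin n ⊕ Fin m) ⊕ Fin l) ((Fin n ⊕ Fin m) ⊕ Fin l) ℝ :=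
  fromBlocks (fromBlocks A Bᵀ (-B) 0) (fromRows 0 (-Cᵀ)) (fromCols 0 C) 0

/-!
If `𝓑 v = λ v` with `v ≠ 0`, then `Re (v* 𝓑 v) = Re λ · ‖v‖²`, and for a real matrix `Re (v* 𝓑 v)`
is the sum of the real quadratic forms of `𝓑` at `Re v` and at `Im v`. The off-diagonal blocks of
`𝓑` form a skew-symmetric matrix, so the quadratic form of `𝓑` at `(x, y, z)` is `xᵀ A x ≥ 0`.
-/

open scoped ComplexOrder

theorem re_star_dotProduct_map_ofReal_mulVec {N : Type*} [Fintype N] (M : Matrix N N ℝ)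
    (v : N → ℂ) :
    (star v ⬝ᵥ M.map Complex.ofReal *ᵥ v).re =
      (fun i => (v i).re) ⬝ᵥ M *ᵥ (fun i => (v i).re) +
        (fun i => (v i).im) ⬝ᵥ M *ᵥ (fun i => (v i).im) := by
  simp only [dotProduct, mulVec, map_apply, Pi.star_apply, Complex.re_sum, Finset.mul_sum,
    ← Finset.sum_add_distrib]
  refine Finset.sum_congr rfl fun i _ => Finset.sum_congr rfl fun j _ => ?_
  simp only [Complex.mul_re, Complex.star_def, Complex.conj_re, Complex.conj_im,
    Complex.mul_im, Complex.ofReal_re, Complex.ofReal_im]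
  ring

theorem re_nonneg_of_map_ofReal_mulVec_eq_smul {N : Type*} [Fintype N] {M : Matrix N N ℝ}
    (hM : ∀ x, 0 ≤ x ⬝ᵥ M *ᵥ x) {lam : ℂ} {v : N → ℂ} (hv : v ≠ 0)
    (heig : M.map Complex.ofReal *ᵥ v = lam • v) : 0 ≤ lam.re := by
  obtain ⟨hnorm_pos, hnorm_real⟩ := Complex.pos_iff.mp (dotProduct_star_self_pos_iff.mpr hv)
  have hquad := re_star_dotProduct_map_ofReal_mulVec M v ▸ add_nonneg (hM _) (hM _)
  rw [heig, dotProduct_smul, smul_eq_mul, Complex.mul_re, ← hnorm_real, mul_zero,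
    sub_zero] at hquad
  exact nonneg_of_mul_nonneg_left hquad hnorm_pos

theorem calB_sumElim_dotProduct_mulVec {n m l : ℕ} (A : Matrix (Fin n) (Fin n) ℝ)
    (B : Matrix (Fin m) (Fin n) ℝ) (C : Matrix (Fin l) (Fin m) ℝ)
    (x : Fin n → ℝ) (y : Fin m → ℝ) (z : Fin l → ℝ) :
    Sum.elim (Sum.elim x y) z ⬝ᵥ calB A B C *ᵥ Sum.elim (Sum.elim x y) z = x ⬝ᵥ A *ᵥ x := by
  simp [calB, fromBlocks_mulVec, sumElim_dotProduct_sumElim, dotProduct_add, neg_mulVec,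
    dotProduct_transpose_mulVec]

/-- Every eigenvalue λ ∈ ℂ of 𝓑 satisfies Re(λ) ≥ 0 (𝓑 is positive semistable). -/
theorem calB_positive_semistable {n m l : ℕ} (A : Matrix (Fin n) (Fin n) ℝ)
    (B : Matrix (Fin m) (Fin n) ℝ) (C : Matrix (Fin l) (Fin m) ℝ)
    (hA : A.PosDef) (lam : ℂ) (v : (Fin n ⊕ Fin m) ⊕ Fin l → ℂ) (hv : v ≠ 0)
    (heig : ((calB A B C).map Complex.ofReal).mulVec v = lam • v) :
    0 ≤ lam.re := by
  refine re_nonneg_of_map_ofReal_mulVec_eq_smul (fun w => ?_) hv heig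
  rw [← Sum.elim_comp_inl_inr w, ← Sum.elim_comp_inl_inr (w ∘ Sum.inl),
    calB_sumElim_dotProduct_mulVec]
  simpa using hA.posSemidef.dotProduct_mulVec_nonneg ((w ∘ Sum.inl) ∘ Sum.inl)
end

section
/- If A ∈ ℝ^{n×n} is symmetric positive definite, B ∈ ℝ^{m×n} has full row rank m with n ≥ m, and C ∈ ℝ^{l×m} has full row rank l with m ≥ l, then the block matrix 𝒜 = [[A, Bᵀ, 0], [B, 0, Cᵀ], [0, C, 0]] ∈ ℝ^{(n+m+l)×(n+m+l)} is nonsingular; consequently, for any f ∈ ℝⁿ, g ∈ ℝᵐ, h ∈ ℝˡ the system 𝒜(x; y; z) = (f; g; h) has a unique solution. -/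
open Matrix

/-- The three-by-three block saddle point matrix 𝒜 = [[A, Bᵀ, 0], [B, 0, Cᵀ], [0, C, 0]]. -/
def calA {n m l : ℕ} (A : Matrix (Fin n) (Fin n) ℝ) (B : Matrix (Fin m) (Fin n) ℝ)
    (C : Matrix (Fin l) (Fin m) ℝ) :
    Matrix ((Fin n ⊕ Fin m) ⊕ Fin l) ((Fin n ⊕ Fin m) ⊕ Fin l) ℝ :=
  fromBlocks (fromBlocks A Bᵀ B 0) (fromRows 0 Cᵀ) (fromCols 0 C) 0

/-- A matrix with full row rank has a transpose with trivial kernel. -/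
lemma fullRank_mulVec_transpose_eq_zero {a b : ℕ} (M : Matrix (Fin a) (Fin b) ℝ)
    (hM : M.rank = a) {y : Fin a → ℝ} (hy : Mᵀ *ᵥ y = 0) : y = 0 := by
  have h1 : Mᵀ.rank = a := by rw [Matrix.rank_transpose]; exact hM
  have h2 := LinearMap.finrank_range_add_finrank_ker (Mᵀ.mulVecLin)
  rw [Matrix.rank] at h1
  rw [h1, Module.finrank_pi, Fintype.card_fin] at h2
  have h3 : Module.finrank ℝ (LinearMap.ker Mᵀ.mulVecLin) = 0 := by omega
  have hker : LinearMap.ker Mᵀ.mulVecLin = ⊥ := Submodule.finrank_eq_zero.1 h3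
  have hmem : y ∈ LinearMap.ker Mᵀ.mulVecLin := by
    rw [LinearMap.mem_ker, Matrix.mulVecLin_apply, hy]
  rwa [hker, Submodule.mem_bot] at hmem

/-- The saddle point matrix has trivial kernel. -/
lemma calA_ker {n m l : ℕ} (A : Matrix (Fin n) (Fin n) ℝ)
    (B : Matrix (Fin m) (Fin n) ℝ) (C : Matrix (Fin l) (Fin m) ℝ)
    (hA : A.PosDef) (hB : B.rank = m) (hC : C.rank = l)
    {v : (Fin n ⊕ Fin m) ⊕ Fin l → ℝ} (hv : (calA A B C).mulVec v = 0) : v = 0 := by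
  set x : Fin n → ℝ := fun i => v (Sum.inl (Sum.inl i)) with hxdef
  set y : Fin m → ℝ := fun i => v (Sum.inl (Sum.inr i)) with hydef
  set z : Fin l → ℝ := fun i => v (Sum.inr i) with hzdef
  have h1 : A *ᵥ x + Bᵀ *ᵥ y = 0 := by
    funext i
    have := congrFun hv (Sum.inl (Sum.inl i))
    simpa [calA, mulVec, dotProduct, fromBlocks, Fintype.sum_sum_type, x, y, z] using this
  have h2 : B *ᵥ x + Cᵀ *ᵥ z = 0 := by
    funext i
    have := congrFun hv (Sum.inl (Sum.inr i))
    simpa [calA, mulVec, dotProduct, fromBlocks, fromRows_apply_inr, Fintype.sum_sum_type, x, y, z] using this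
  have h3 : C *ᵥ y = 0 := by
    funext i
    have := congrFun hv (Sum.inr i)
    simpa [calA, mulVec, dotProduct, fromCols, Fintype.sum_sum_type, x, y, z] using this
  have hBxy : (B *ᵥ x) ⬝ᵥ y = 0 := by
    have hBx : B *ᵥ x = -(Cᵀ *ᵥ z) := by
      rw [eq_neg_iff_add_eq_zero]; exact h2
    rw [hBx, neg_dotProduct, Matrix.mulVec_transpose, ← Matrix.dotProduct_mulVec, h3,
      dotProduct_zero, neg_zero]
  have hxAx : x ⬝ᵥ (A *ᵥ x) = 0 := by
    have : x ⬝ᵥ (A *ᵥ x + Bᵀ *ᵥ y) = 0 := by rw [h1, dotProduct_zero]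
    rw [dotProduct_add] at this
    have hxBy : x ⬝ᵥ (Bᵀ *ᵥ y) = (B *ᵥ x) ⬝ᵥ y := by
      rw [Matrix.dotProduct_mulVec, Matrix.vecMul_transpose]
    rw [hxBy, hBxy, add_zero] at this
    exact this
  have hx : x = 0 := by
    by_contra hx0
    have := hA.dotProduct_mulVec_pos hx0
    simp only [star_trivial] at this
    rw [hxAx] at this
    exact lt_irrefl 0 this
  have hy : y = 0 := by
    apply fullRank_mulVec_transpose_eq_zero B hB
    rw [hx, mulVec_zero, zero_add] at h1
    exact h1
  have hz : z = 0 := by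
    apply fullRank_mulVec_transpose_eq_zero C hC
    rw [hx, mulVec_zero, zero_add] at h2
    exact h2
  funext i
  rcases i with (i | i) | i
  · exact congrFun hx i
  · exact congrFun hy i
  · exact congrFun hz i

/-- If `A` is symmetric positive definite, `B` has full row rank `m` with `n ≥ m`, and `C`
has full row rank `l` with `m ≥ l`, then 𝒜 is nonsingular; consequently, for any right-hand
side `(f; g; h)` the system `𝒜 (x; y; z) = (f; g; h)` has a unique solution. -/
theorem calA_nonsingular {n m l : ℕ} (A : Matrix (Fin n) (Fin n) ℝ)
    (B : Matrix (Fin m) (Fin n) ℝ) (C : Matrix (Fin l) (Fin m) ℝ)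
    (hA : A.PosDef) (hB : B.rank = m) (hC : C.rank = l) (hnm : m ≤ n) (hml : l ≤ m) :
    IsUnit (calA A B C).det ∧
      ∀ (f : Fin n → ℝ) (g : Fin m → ℝ) (h : Fin l → ℝ),
        ∃! v : (Fin n ⊕ Fin m) ⊕ Fin l → ℝ,
          (calA A B C).mulVec v = Sum.elim (Sum.elim f g) h := by
  have hdet : (calA A B C).det ≠ 0 := by
    intro h0
    obtain ⟨v, hv0, hv⟩ := (Matrix.exists_mulVec_eq_zero_iff).2 h0
    exact hv0 (calA_ker A B C hA hB hC hv)
  have hu : IsUnit (calA A B C).det := isUnit_iff_ne_zero.2 hdet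
  refine ⟨hu, fun f g h => ?_⟩
  refine ⟨(calA A B C)⁻¹ *ᵥ Sum.elim (Sum.elim f g) h, ?_, ?_⟩
  · show calA A B C *ᵥ ((calA A B C)⁻¹ *ᵥ (Sum.elim (Sum.elim f g) h)) = _
    rw [Matrix.mulVec_mulVec, Matrix.mul_nonsing_inv _ hu, Matrix.one_mulVec]
  · intro w hw
    rw [← hw, Matrix.mulVec_mulVec, Matrix.nonsing_inv_mul _ hu, Matrix.one_mulVec]
end

section
/- If (λ, v) with v = (x; y; z) ∈ ℂ^{n+m+l}, v ≠ 0, is an eigenpair of the iteration matrix G_{α,β} = I − P⁻¹𝓑 and λ ≠ 0, then y ≠ 0. -/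
open Matrix

/-- The block upper triangular preconditioner
`P = [[A, Bᵀ, 0], [0, αI + βBBᵀ, −Cᵀ], [0, 0, αI + βCCᵀ]]`. -/
def precondP {n m l : ℕ} (α β : ℝ) (A : Matrix (Fin n) (Fin n) ℝ)
    (B : Matrix (Fin m) (Fin n) ℝ) (C : Matrix (Fin l) (Fin m) ℝ) :
    Matrix ((Fin n ⊕ Fin m) ⊕ Fin l) ((Fin n ⊕ Fin m) ⊕ Fin l) ℝ :=
  fromBlocks
    (fromBlocks A Bᵀ 0 (α • (1 : Matrix (Fin m) (Fin m) ℝ) + β • (B * Bᵀ)))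
    (fromRows 0 (-Cᵀ)) 0 (α • (1 : Matrix (Fin l) (Fin l) ℝ) + β • (C * Cᵀ))

/-- The iteration matrix `G_{α,β} = I − P⁻¹ 𝓑`. -/
noncomputable def iterG {n m l : ℕ} (α β : ℝ) (A : Matrix (Fin n) (Fin n) ℝ)
    (B : Matrix (Fin m) (Fin n) ℝ) (C : Matrix (Fin l) (Fin m) ℝ) :
    Matrix ((Fin n ⊕ Fin m) ⊕ Fin l) ((Fin n ⊕ Fin m) ⊕ Fin l) ℝ :=
  1 - (precondP α β A B C)⁻¹ * calB A B C

/-!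
With `y = 0`, multiplying the eigen-equation by `P` gives `𝓑 v = (1 - λ) P v`. The first block
rows of `𝓑` and `P` agree, so the first row reads `λ A x = 0`, whence `x = 0`. The second block
rows then differ only in `B x = 0`, so `λ Cᵀ z = 0`, and `z = 0` because `C` has full row rank.
-/

namespace Matrix

theorem isUnit_of_rank_eq_card {K n : Type*} [Field K] [Fintype n] [DecidableEq n]
    {M : Matrix n n K} (h : M.rank = Fintype.card n) : IsUnit M := by
  rw [← linearIndependent_rows_iff_isUnit, linearIndependent_iff_card_eq_finrank_span,
    Set.finrank, ← rank_eq_finrank_span_row, h]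

theorem posDef_smul_one_add_smul_mul_transpose {m n : Type*} [Fintype m] [Fintype n]
    [DecidableEq m] {α β : ℝ} (hα : 0 < α) (hβ : 0 ≤ β) (B : Matrix m n ℝ) :
    (α • (1 : Matrix m m ℝ) + β • (B * Bᵀ)).PosDef := by
  have hBBt : (B * Bᵀ).PosSemidef := by
    simpa only [conjTranspose_eq_transpose_of_trivial] using posSemidef_self_mul_conjTranspose B
  exact (PosDef.one.smul hα).add_posSemidef (hBBt.smul hβ)

theorem mulVec_map_transpose_injective {l m : Type*} [Fintype l] [Fintype m] [DecidableEq l]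
    {S : Type*} [Field S] (f : ℝ →+* S) {C : Matrix l m ℝ} (hC : C.rank = Fintype.card l) :
    Function.Injective (C.map f)ᵀ.mulVec := by
  have hunit : IsUnit (C.map f * (C.map f)ᵀ) := by
    rw [← transpose_map, ← Matrix.map_mul]
    exact (isUnit_of_rank_eq_card ((rank_self_mul_transpose C).trans hC)).map f.mapMatrix
  intro z w h
  apply mulVec_injective_iff_isUnit.mpr hunit
  rw [← mulVec_mulVec, ← mulVec_mulVec, h]

theorem mulVec_eq_one_sub_smul_of_mapMatrix_mulVec_eq {n R S : Type*} [Fintype n] [DecidableEq n]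
    [CommRing R] [CommRing S] (f : R →+* S) {P M : Matrix n n R} (hP : IsUnit P)
    {v : n → S} {μ : S} (h : f.mapMatrix (1 - P⁻¹ * M) *ᵥ v = μ • v) :
    f.mapMatrix M *ᵥ v = (1 - μ) • (f.mapMatrix P *ᵥ v) := by
  have hPM : f.mapMatrix P * f.mapMatrix (P⁻¹ * M) = f.mapMatrix M := by
    rw [← map_mul, ← Matrix.mul_assoc, mul_nonsing_inv _ ((isUnit_iff_isUnit_det P).mp hP),
      Matrix.one_mul]
  have hG : f.mapMatrix (P⁻¹ * M) *ᵥ v = v - μ • v := by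
    rw [← h, map_sub, map_one, sub_mulVec, one_mulVec, sub_sub_cancel]
  rw [← hPM, ← mulVec_mulVec, hG, mulVec_sub, mulVec_smul, sub_smul, one_smul]

end Matrix

theorem eq_zero_of_eq_one_sub_smul_self {K V : Type*} [Field K] [AddCommGroup V] [Module K V]
    {c : K} (hc : c ≠ 0) {a : V} (h : a = (1 - c) • a) : a = 0 := by
  rw [sub_smul, one_smul, eq_sub_iff_add_eq, add_eq_left, smul_eq_zero] at h
  exact h.resolve_left hc

section DoubleSaddlePoint

variable {n m l : ℕ} {S : Type*} [CommRing S] (f : ℝ →+* S) (α β : ℝ)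
  (A : Matrix (Fin n) (Fin n) ℝ) (B : Matrix (Fin m) (Fin n) ℝ) (C : Matrix (Fin l) (Fin m) ℝ)

theorem isUnit_precondP (hA : A.PosDef) (hα : 0 < α) (hβ : 0 ≤ β) :
    IsUnit (precondP α β A B C) := by
  rw [isUnit_iff_isUnit_det, precondP, det_fromBlocks_zero₂₁, det_fromBlocks_zero₂₁]
  exact (hA.det_pos.ne'.isUnit.mul
    (posDef_smul_one_add_smul_mul_transpose hα hβ B).det_pos.ne'.isUnit).mul
    (posDef_smul_one_add_smul_mul_transpose hα hβ C).det_pos.ne'.isUnit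

theorem mapMatrix_calB_mulVec_of_snd_eq_zero (x : Fin n → S) (z : Fin l → S) :
    f.mapMatrix (calB A B C) *ᵥ Sum.elim (Sum.elim x 0) z =
      Sum.elim (Sum.elim (A.map f *ᵥ x) (-(B.map f *ᵥ x) - (C.map f)ᵀ *ᵥ z)) 0 := by
  ext ((i | i) | i) <;> simp [calB, mulVec, dotProduct, Fintype.sum_sum_type, sub_eq_add_neg]

theorem mapMatrix_precondP_mulVec_of_snd_eq_zero (x : Fin n → S) (z : Fin l → S) :
    f.mapMatrix (precondP α β A B C) *ᵥ Sum.elim (Sum.elim x 0) z =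
      Sum.elim (Sum.elim (A.map f *ᵥ x) (-((C.map f)ᵀ *ᵥ z)))
        (f.mapMatrix (α • 1 + β • (C * Cᵀ)) *ᵥ z) := by
  ext ((i | i) | i) <;> simp [precondP, mulVec, dotProduct, Fintype.sum_sum_type]

end DoubleSaddlePoint

theorem eigenvector_second_component_ne_zero_general {n m l : ℕ} (α β : ℝ)
    (A : Matrix (Fin n) (Fin n) ℝ) (B : Matrix (Fin m) (Fin n) ℝ)
    (C : Matrix (Fin l) (Fin m) ℝ)
    (hA : A.PosDef) (hC : C.rank = l)
    (hα : 0 < α) (hβ : 0 < β)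
    (lam : ℂ) (x : Fin n → ℂ) (y : Fin m → ℂ) (z : Fin l → ℂ)
    (hv : Sum.elim (Sum.elim x y) z ≠ 0)
    (heig : ((iterG α β A B C).map Complex.ofReal).mulVec (Sum.elim (Sum.elim x y) z) =
      lam • Sum.elim (Sum.elim x y) z)
    (hlam : lam ≠ 0) :
    y ≠ 0 := by
  rintro rfl
  have key := mulVec_eq_one_sub_smul_of_mapMatrix_mulVec_eq Complex.ofRealHom
    (isUnit_precondP α β A B C hA hα hβ.le) heig
  rw [mapMatrix_calB_mulVec_of_snd_eq_zero, mapMatrix_precondP_mulVec_of_snd_eq_zero] at key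
  have hx_row : A.map Complex.ofReal *ᵥ x = (1 - lam) • (A.map Complex.ofReal *ᵥ x) :=
    funext fun i => congrFun key (.inl (.inl i))
  have hz_row : -(B.map Complex.ofReal *ᵥ x) - (C.map Complex.ofReal)ᵀ *ᵥ z =
      (1 - lam) • -((C.map Complex.ofReal)ᵀ *ᵥ z) :=
    funext fun i => congrFun key (.inl (.inr i))
  have hx : x = 0 := mulVec_injective_iff_isUnit.mpr (hA.isUnit.map Complex.ofRealHom.mapMatrix)
    ((eq_zero_of_eq_one_sub_smul_self hlam hx_row).trans (mulVec_zero _).symm)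
  rw [hx, mulVec_zero, neg_zero, zero_sub] at hz_row
  have hz : z = 0 :=
    mulVec_map_transpose_injective Complex.ofRealHom (hC.trans (Fintype.card_fin l).symm)
    ((neg_eq_zero.mp (eq_zero_of_eq_one_sub_smul_self hlam hz_row)).trans (mulVec_zero _).symm)
  exact hv (by simp [hx, hz])

/-- If `(λ, v)` with `v = (x; y; z) ≠ 0` is an eigenpair of the iteration matrix
`G_{α,β} = I − P⁻¹𝓑` and `λ ≠ 0`, then `y ≠ 0`. -/
theorem eigenvector_second_component_ne_zero {n m l : ℕ} (α β : ℝ)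
    (A : Matrix (Fin n) (Fin n) ℝ) (B : Matrix (Fin m) (Fin n) ℝ)
    (C : Matrix (Fin l) (Fin m) ℝ)
    (hA : A.PosDef) (hB : B.rank = m) (hC : C.rank = l) (hnm : m ≤ n) (hml : l ≤ m)
    (hα : 0 < α) (hβ : 0 < β)
    (lam : ℂ) (x : Fin n → ℂ) (y : Fin m → ℂ) (z : Fin l → ℂ)
    (hv : Sum.elim (Sum.elim x y) z ≠ 0)
    (heig : ((iterG α β A B C).map Complex.ofReal).mulVec (Sum.elim (Sum.elim x y) z) =
      lam • Sum.elim (Sum.elim x y) z)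
    (hlam : lam ≠ 0) :
    y ≠ 0 :=
  eigenvector_second_component_ne_zero_general α β A B C hA hC hα hβ lam x y z hv heig hlam
end

section
/- Let (λ, v) with v = (x; y; z) ∈ ℂ^{n+m+l} be an eigenpair of G_{α,β} = I − P⁻¹𝓑 with λ ≠ 0 and λ ≠ 1, normalized so that ‖y‖₂ = 1. Set a = yᴴ(αI + βBBᵀ)y, c = yᴴ(αI + βBBᵀ)y − yᴴBA⁻¹Bᵀy, and b = 2yᴴ(αI + βBBᵀ)y − yᴴCᵀ(αI + βCCᵀ)⁻¹Cy − yᴴBA⁻¹Bᵀy. Then a > 0, and λ satisfies the quadratic equation λ² − (b/a)λ + (c/a) = 0. -/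
/-!
Since `P` is invertible, `G v = λ v` means `𝓑 v = (1 - λ) P v`. Its first block row reads
`λ (A x + Bᵀ y) = 0`, so `x = -A⁻¹ Bᵀ y` as `λ ≠ 0`; its third gives `(1 - λ) z = T⁻¹ C y` with
`T = αI + βCCᵀ`. Substituting both into the second row multiplied by `1 - λ` yields the quadratic
eigenvalue problem `(λ² S - λ (2S - CᵀT⁻¹C - BA⁻¹Bᵀ) + (S - BA⁻¹Bᵀ)) y = 0` with `S = αI + βBBᵀ`,
and pairing it with `yᴴ` gives `λ² a - λ b + c = 0`. The numbers `a, b, c` are real because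
`S`, `BA⁻¹Bᵀ` and `CᵀT⁻¹C` are real symmetric, and `a > 0` because `S` is positive definite.
-/

open Matrix

open scoped ComplexOrder

theorem mulVec_eq_smul_mulVec_of_one_sub_mul_mulVec_eq_smul {R ι : Type*} [CommRing R]
    [Fintype ι] [DecidableEq ι] {P Q M : Matrix ι ι R} (hPQ : P * Q = 1) {v : ι → R} {μ : R}
    (h : (1 - Q * M) *ᵥ v = μ • v) :
    M *ᵥ v = (1 - μ) • P *ᵥ v := by
  have hQM : (Q * M) *ᵥ v = (1 - μ) • v := by
    rw [sub_mulVec, one_mulVec] at h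
    rw [sub_smul, one_smul, ← h, sub_sub_cancel]
  rw [← mulVec_smul, ← hQM, mulVec_mulVec, ← Matrix.mul_assoc, hPQ, Matrix.one_mul]

theorem map_nonsing_inv_mul_map {R S : Type*} [CommRing R] [CommRing S] {ι : Type*} [Fintype ι]
    [DecidableEq ι] (f : R →+* S) {A : Matrix ι ι R} (hA : IsUnit A.det) :
    A⁻¹.map f * A.map f = 1 := by
  rw [← Matrix.map_mul, nonsing_inv_mul _ hA, Matrix.map_one _ f.map_zero f.map_one]

theorem map_mul_map_nonsing_inv {R S : Type*} [CommRing R] [CommRing S] {ι : Type*} [Fintype ι]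
    [DecidableEq ι] (f : R →+* S) {A : Matrix ι ι R} (hA : IsUnit A.det) :
    A.map f * A⁻¹.map f = 1 := by
  rw [← Matrix.map_mul, mul_nonsing_inv _ hA, Matrix.map_one _ f.map_zero f.map_one]

section BlockSystem

variable {n m l : Type*} [Fintype n] [Fintype m] [Fintype l]

theorem block_equations_of_mulVec_eq_smul_mulVec {R : Type*} [CommRing R]
    {A : Matrix n n R} {B : Matrix m n R} {C : Matrix l m R}
    {S : Matrix m m R} {T : Matrix l l R} {x : n → R} {y : m → R} {z : l → R} {μ : R}
    (h : fromBlocks (fromBlocks A Bᵀ (-B) 0) (fromRows 0 (-Cᵀ)) (fromCols 0 C) 0 *ᵥ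
        Sum.elim (Sum.elim x y) z =
      μ • fromBlocks (fromBlocks A Bᵀ 0 S) (fromRows 0 (-Cᵀ)) 0 T *ᵥ Sum.elim (Sum.elim x y) z) :
    A *ᵥ x + Bᵀ *ᵥ y = μ • (A *ᵥ x + Bᵀ *ᵥ y) ∧
      -(B *ᵥ x) - Cᵀ *ᵥ z = μ • (S *ᵥ y - Cᵀ *ᵥ z) ∧ C *ᵥ y = μ • T *ᵥ z := by
  simp only [fromBlocks_mulVec, fromRows_mulVec, fromCols_mulVec_sumElim, Sum.elim_comp_inl,
    Sum.elim_comp_inr, funext_iff, Sum.forall] at h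
  simp only [funext_iff]
  refine ⟨fun i => ?_, fun i => ?_, fun i => ?_⟩
  · simpa using h.1.1 i
  · simpa [neg_mulVec, sub_eq_add_neg, mul_add] using h.1.2 i
  · simpa using h.2 i

variable {K : Type*} [Field K] [DecidableEq n] [DecidableEq l]

theorem quadratic_eigen_equation_of_block_equations {A A' : Matrix n n K} {B : Matrix m n K}
    {C : Matrix l m K} {S : Matrix m m K} {T T' : Matrix l l K} (hA : A' * A = 1)
    (hT : T' * T = 1) {x : n → K} {y : m → K} {z : l → K} {lam : K} (hlam : lam ≠ 0)
    (h1 : A *ᵥ x + Bᵀ *ᵥ y = (1 - lam) • (A *ᵥ x + Bᵀ *ᵥ y))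
    (h2 : -(B *ᵥ x) - Cᵀ *ᵥ z = (1 - lam) • (S *ᵥ y - Cᵀ *ᵥ z))
    (h3 : C *ᵥ y = (1 - lam) • T *ᵥ z) :
    lam ^ 2 • S *ᵥ y - lam • (2 • S *ᵥ y - (Cᵀ * T' * C) *ᵥ y - (B * A' * Bᵀ) *ᵥ y) +
      (S *ᵥ y - (B * A' * Bᵀ) *ᵥ y) = 0 := by
  have hAx : A *ᵥ x = -(Bᵀ *ᵥ y) := by
    have : lam • (A *ᵥ x + Bᵀ *ᵥ y) = 0 := by linear_combination (norm := module) h1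
    exact eq_neg_of_add_eq_zero_left ((smul_eq_zero.mp this).resolve_left hlam)
  have hBx : B *ᵥ x = -((B * A' * Bᵀ) *ᵥ y) := by
    rw [← mulVec_mulVec, ← mulVec_mulVec, ← mulVec_neg, ← mulVec_neg, ← hAx,
      mulVec_mulVec x A', hA, one_mulVec]
  have hCz : (Cᵀ * T' * C) *ᵥ y = (1 - lam) • Cᵀ *ᵥ z := by
    rw [← mulVec_mulVec, ← mulVec_mulVec, h3, mulVec_smul, mulVec_mulVec z T', hT, one_mulVec,
      mulVec_smul]
  rw [hBx] at h2
  linear_combination (norm := module) -(1 - lam) • h2 + lam • hCz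

end BlockSystem

theorem posDef_smul_one_add_smul_mul_conjTranspose {𝕜 : Type*} [RCLike 𝕜] {m n : Type*}
    [Fintype m] [Fintype n] [DecidableEq m] {α β : ℝ} (hα : 0 < α) (hβ : 0 ≤ β)
    (B : Matrix m n 𝕜) : (α • (1 : Matrix m m 𝕜) + β • (B * Bᴴ)).PosDef :=
  (PosDef.one.smul hα).add_posSemidef ((posSemidef_self_mul_conjTranspose B).smul hβ)

theorem im_star_dotProduct_map_ofReal_mulVec_self {n : Type*} [Fintype n]
    {M : Matrix n n ℝ} (hM : M.IsHermitian) (y : n → ℂ) :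
    (star y ⬝ᵥ M.map Complex.ofReal *ᵥ y).im = 0 :=
  (hM.map _ fun _ => by simp).im_star_dotProduct_mulVec_self y

theorem posDef_map_ofReal_smul_one_add_smul_mul_transpose {m n : Type*} [Fintype m] [Fintype n]
    [DecidableEq m] {α β : ℝ} (hα : 0 < α) (hβ : 0 ≤ β) (B : Matrix m n ℝ) :
    ((α • (1 : Matrix m m ℝ) + β • (B * Bᵀ)).map Complex.ofReal).PosDef := by
  have hmap : (α • (1 : Matrix m m ℝ) + β • (B * Bᵀ)).map Complex.ofReal =
      α • (1 : Matrix m m ℂ) + β • (B.map Complex.ofReal * (B.map Complex.ofReal)ᴴ) := by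
    ext i j
    simp [Matrix.one_apply, Matrix.mul_apply, apply_ite Complex.ofReal]
  rw [hmap]
  exact posDef_smul_one_add_smul_mul_conjTranspose hα hβ _

section Complexification

variable {n m l : ℕ} (α β : ℝ) (A : Matrix (Fin n) (Fin n) ℝ) (B : Matrix (Fin m) (Fin n) ℝ)
  (C : Matrix (Fin l) (Fin m) ℝ)

theorem calB_map {R : Type*} [Ring R] (f : ℝ →+* R) :
    (calB A B C).map f = fromBlocks (fromBlocks (A.map f) (B.map f)ᵀ (-B.map f) 0)
      (fromRows 0 (-(C.map f)ᵀ)) (fromCols 0 (C.map f)) 0 := by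
  simp [calB, fromBlocks_map, fromRows_map, fromCols_map, transpose_map, Matrix.map_neg]

theorem precondP_map {R : Type*} [Ring R] (f : ℝ →+* R) :
    (precondP α β A B C).map f = fromBlocks (fromBlocks (A.map f) (B.map f)ᵀ 0
      ((α • (1 : Matrix (Fin m) (Fin m) ℝ) + β • (B * Bᵀ)).map f))
      (fromRows 0 (-(C.map f)ᵀ)) 0 ((α • (1 : Matrix (Fin l) (Fin l) ℝ) + β • (C * Cᵀ)).map f) := by
  simp [precondP, fromBlocks_map, fromRows_map, transpose_map, Matrix.map_neg]

variable {α β A B C}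

theorem isUnit_det_precondP (hA : IsUnit A.det)
    (hS : IsUnit (α • (1 : Matrix (Fin m) (Fin m) ℝ) + β • (B * Bᵀ)).det)
    (hT : IsUnit (α • (1 : Matrix (Fin l) (Fin l) ℝ) + β • (C * Cᵀ)).det) :
    IsUnit (precondP α β A B C).det := by
  rw [precondP, det_fromBlocks_zero₂₁, det_fromBlocks_zero₂₁]
  exact (hA.mul hS).mul hT

theorem calB_map_mulVec_eq_smul_precondP_map_mulVec {R : Type*} [CommRing R] (f : ℝ →+* R)
    (hP : IsUnit (precondP α β A B C).det) {v : (Fin n ⊕ Fin m) ⊕ Fin l → R} {lam : R}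
    (heig : (iterG α β A B C).map f *ᵥ v = lam • v) :
    (calB A B C).map f *ᵥ v = (1 - lam) • (precondP α β A B C).map f *ᵥ v := by
  refine mulVec_eq_smul_mulVec_of_one_sub_mul_mulVec_eq_smul
    (Q := (precondP α β A B C)⁻¹.map f) ?_ ?_
  · exact map_mul_map_nonsing_inv f hP
  · rwa [iterG, ← RingHom.mapMatrix_apply, map_sub, map_one, map_mul] at heig

theorem quadratic_eigen_equation_of_iterG_eigen (hA : A.PosDef) (hα : 0 < α) (hβ : 0 ≤ β)
    {lam : ℂ} {x : Fin n → ℂ} {y : Fin m → ℂ} {z : Fin l → ℂ} (hlam : lam ≠ 0)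
    (heig : (iterG α β A B C).map Complex.ofReal *ᵥ Sum.elim (Sum.elim x y) z =
      lam • Sum.elim (Sum.elim x y) z) :
    let S := (α • (1 : Matrix (Fin m) (Fin m) ℝ) + β • (B * Bᵀ)).map Complex.ofReal
    let T := α • (1 : Matrix (Fin l) (Fin l) ℝ) + β • (C * Cᵀ)
    lam ^ 2 • S *ᵥ y - lam • (2 • S *ᵥ y - (Cᵀ * T⁻¹ * C).map Complex.ofReal *ᵥ y -
      (B * A⁻¹ * Bᵀ).map Complex.ofReal *ᵥ y) + (S *ᵥ y - (B * A⁻¹ * Bᵀ).map Complex.ofReal *ᵥ y)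
      = 0 := by
  intro S T
  have hAu : IsUnit A.det := hA.det_pos.ne'.isUnit
  have hTu : IsUnit T.det := (posDef_smul_one_add_smul_mul_conjTranspose hα hβ C).det_pos.ne'.isUnit
  have hSu : IsUnit (α • (1 : Matrix (Fin m) (Fin m) ℝ) + β • (B * Bᵀ)).det :=
    (posDef_smul_one_add_smul_mul_conjTranspose hα hβ B).det_pos.ne'.isUnit
  have hblock := calB_map_mulVec_eq_smul_precondP_map_mulVec Complex.ofRealHom
    (isUnit_det_precondP hAu hSu hTu) heig
  rw [calB_map, precondP_map] at hblock
  obtain ⟨h1, h2, h3⟩ := block_equations_of_mulVec_eq_smul_mulVec hblock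
  have hquad := quadratic_eigen_equation_of_block_equations
    (map_nonsing_inv_mul_map Complex.ofRealHom hAu) (map_nonsing_inv_mul_map Complex.ofRealHom hTu)
    hlam h1 h2 h3
  simp only [← transpose_map, ← Matrix.map_mul] at hquad
  exact hquad

end Complexification

theorem eigenvalue_satisfies_quadratic_general {n m l : ℕ} (α β : ℝ)
    (A : Matrix (Fin n) (Fin n) ℝ) (B : Matrix (Fin m) (Fin n) ℝ)
    (C : Matrix (Fin l) (Fin m) ℝ)
    (hA : A.PosDef)
    (hα : 0 < α) (hβ : 0 < β)
    (lam : ℂ) (x : Fin n → ℂ) (y : Fin m → ℂ) (z : Fin l → ℂ)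
    (heig : ((iterG α β A B C).map Complex.ofReal).mulVec (Sum.elim (Sum.elim x y) z) =
      lam • Sum.elim (Sum.elim x y) z)
    (hlam0 : lam ≠ 0)
    (hy : star y ⬝ᵥ y = 1) :
    let a : ℂ := star y ⬝ᵥ
      (((α • (1 : Matrix (Fin m) (Fin m) ℝ) + β • (B * Bᵀ))).map Complex.ofReal).mulVec y
    let s : ℂ := star y ⬝ᵥ ((B * A⁻¹ * Bᵀ).map Complex.ofReal).mulVec y
    let t : ℂ := star y ⬝ᵥ
      ((Cᵀ * (α • (1 : Matrix (Fin l) (Fin l) ℝ) + β • (C * Cᵀ))⁻¹ * C).map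
        Complex.ofReal).mulVec y
    let c : ℂ := a - s
    let b : ℂ := 2 * a - t - s
    a.im = 0 ∧ b.im = 0 ∧ c.im = 0 ∧ 0 < a.re ∧
      lam ^ 2 - (b / a) * lam + c / a = 0 := by
  intro a s t c b
  have hT : (α • (1 : Matrix (Fin l) (Fin l) ℝ) + β • (C * Cᵀ)).PosDef :=
    posDef_smul_one_add_smul_mul_conjTranspose hα hβ.le C
  have ha : 0 < a := by
    have hy0 : y ≠ 0 := by rintro rfl; simp at hy
    exact (posDef_map_ofReal_smul_one_add_smul_mul_transpose hα hβ.le B).dotProduct_mulVec_pos hy0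
  obtain ⟨ha_re, ha_im⟩ := Complex.pos_iff.mp ha
  have hs : s.im = 0 := im_star_dotProduct_map_ofReal_mulVec_self
    (isHermitian_mul_mul_conjTranspose B hA.isHermitian.inv) y
  have ht : t.im = 0 := im_star_dotProduct_map_ofReal_mulVec_self
    (isHermitian_mul_mul_conjTranspose Cᵀ hT.isHermitian.inv) y
  have hscalar : lam ^ 2 * a - lam * b + c = 0 := by
    have := congrArg (star y ⬝ᵥ ·)
      (quadratic_eigen_equation_of_iterG_eigen hA hα hβ.le hlam0 heig)
    simp only [dotProduct_add, dotProduct_sub, dotProduct_smul, smul_eq_mul,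
      dotProduct_zero] at this
    linear_combination this
  refine ⟨ha_im.symm, by simp [b, ha_im.symm, hs, ht], by simp [c, ha_im.symm, hs], ha_re, ?_⟩
  field_simp
  linear_combination hscalar

/-- If `(λ, (x; y; z))` is an eigenpair of `G_{α,β} = I − P⁻¹𝓑` with `λ ≠ 0`, `λ ≠ 1`
and `‖y‖₂ = 1` (i.e. `yᴴ y = 1`), then with
`a = yᴴ(αI + βBBᵀ)y`, `c = a − yᴴBA⁻¹Bᵀy` and
`b = 2a − yᴴCᵀ(αI + βCCᵀ)⁻¹Cy − yᴴBA⁻¹Bᵀy`,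
the quantities `a`, `b`, `c` are real, `a > 0`, and `λ² − (b/a)λ + (c/a) = 0`. -/
theorem eigenvalue_satisfies_quadratic {n m l : ℕ} (α β : ℝ)
    (A : Matrix (Fin n) (Fin n) ℝ) (B : Matrix (Fin m) (Fin n) ℝ)
    (C : Matrix (Fin l) (Fin m) ℝ)
    (hA : A.PosDef) (hB : B.rank = m) (hC : C.rank = l) (hnm : m ≤ n) (hml : l ≤ m)
    (hα : 0 < α) (hβ : 0 < β)
    (lam : ℂ) (x : Fin n → ℂ) (y : Fin m → ℂ) (z : Fin l → ℂ)
    (hv : Sum.elim (Sum.elim x y) z ≠ 0)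
    (heig : ((iterG α β A B C).map Complex.ofReal).mulVec (Sum.elim (Sum.elim x y) z) =
      lam • Sum.elim (Sum.elim x y) z)
    (hlam0 : lam ≠ 0) (hlam1 : lam ≠ 1)
    (hy : star y ⬝ᵥ y = 1) :
    let a : ℂ := star y ⬝ᵥ
      (((α • (1 : Matrix (Fin m) (Fin m) ℝ) + β • (B * Bᵀ))).map Complex.ofReal).mulVec y
    let s : ℂ := star y ⬝ᵥ ((B * A⁻¹ * Bᵀ).map Complex.ofReal).mulVec y
    let t : ℂ := star y ⬝ᵥ
      ((Cᵀ * (α • (1 : Matrix (Fin l) (Fin l) ℝ) + β • (C * Cᵀ))⁻¹ * C).map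
        Complex.ofReal).mulVec y
    let c : ℂ := a - s
    let b : ℂ := 2 * a - t - s
    a.im = 0 ∧ b.im = 0 ∧ c.im = 0 ∧ 0 < a.re ∧
      lam ^ 2 - (b / a) * lam + c / a = 0 :=
  eigenvalue_satisfies_quadratic_general α β A B C hA hα hβ lam x y z heig hlam0 hy
end
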